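/- arXiv:1312.7066 — 2 statements merged into one kernel-verified Lean document; each statement's English description precedes it below -/
import Mathlib

section
/- Let R be a crystallographic root system that is not simply laced, with highest short root β₀ (with respect to a fixed base). Then there exists a simple root α such that β₀ + α is a root and ⟨β₀ + α, α∨⟩ ≥ 2; consequently s_α(β₀ + α) is a positive root β with s_α·β = β₀ for the dot action (i.e., s_α(β + ρ) - ρ = β₀). -/
open scoped InnerProductSpace

variable {V : Type*} [NormedAddCommGroup V] [InnerProductSpace ℝ V]

/-- The Cartan integer `⟨β, α∨⟩ = 2(β,α)/(α,α)`. -/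
noncomputable def cartanInt (β α : V) : ℝ := 2 * ⟪β, α⟫_ℝ / ⟪α, α⟫_ℝ

/-- The reflection in the root `α`, as a function. -/
noncomputable def preRefl (α v : V) : V := v - cartanInt v α • α

/-- A (reduced, crystallographic) root system in a real inner product space. -/
structure IsRootSystem (R : Set V) : Prop where
  finite : R.Finite
  nonempty : R.Nonempty
  ne_zero : ∀ α ∈ R, α ≠ 0
  reflect_mem : ∀ α ∈ R, ∀ β ∈ R, preRefl α β ∈ R
  crystallographic : ∀ α ∈ R, ∀ β ∈ R, ∃ n : ℤ, cartanInt β α = (n : ℝ)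
  reduced : ∀ α ∈ R, ∀ t : ℝ, t • α ∈ R → t = 1 ∨ t = -1

/-- `β` is a nonnegative integer combination of elements of `S`. -/
def NonnegComb (S : Set V) (β : V) : Prop :=
  ∃ c : V →₀ ℕ, ↑c.support ⊆ S ∧ β = c.sum fun v n => (n : ℝ) • v

/-- `β` is an integer combination of elements of `S`. -/
def IntComb (S : Set V) (β : V) : Prop :=
  ∃ c : V →₀ ℤ, ↑c.support ⊆ S ∧ β = c.sum fun v n => (n : ℝ) • v

/-- `S` is a base (set of simple roots) of the root system `R`. -/
structure IsBase (R S : Set V) : Prop where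
  subset : S ⊆ R
  indep : LinearIndependent ℝ ((↑) : S → V)
  pos_or_neg : ∀ β ∈ R, NonnegComb S β ∨ NonnegComb S (-β)

/-- All roots have the same length. -/
def IsSimplyLaced (R : Set V) : Prop := ∀ α ∈ R, ∀ β ∈ R, ‖α‖ = ‖β‖

/-- `R` is irreducible: it admits no orthogonal decomposition. -/
def IsIrreducibleRS (R : Set V) : Prop :=
  ∀ R₁ R₂ : Set V, R = R₁ ∪ R₂ → (∀ a ∈ R₁, ∀ b ∈ R₂, ⟪a, b⟫_ℝ = 0) →
    R₁ = ∅ ∨ R₂ = ∅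

/-- `β` is a short root (of minimal length). -/
def IsShort (R : Set V) (β : V) : Prop := β ∈ R ∧ ∀ γ ∈ R, ‖β‖ ≤ ‖γ‖

/-- `β` is a long root (of maximal length). -/
def IsLong (R : Set V) (β : V) : Prop := β ∈ R ∧ ∀ γ ∈ R, ‖γ‖ ≤ ‖β‖

/-- `α₀` is the highest root w.r.t. the base `S`. -/
def IsHighestRoot (R S : Set V) (α₀ : V) : Prop :=
  α₀ ∈ R ∧ ∀ β ∈ R, NonnegComb S (α₀ - β)

/-- `β₀` is the highest short root w.r.t. the base `S`. -/
def IsHighestShortRoot (R S : Set V) (β₀ : V) : Prop :=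
  IsShort R β₀ ∧ ∀ β, IsShort R β → NonnegComb S (β₀ - β)

/-- The Weyl group of `R`, as the subgroup of linear automorphisms generated by the
reflections in the roots. -/
def WeylGroup (R : Set V) : Subgroup (V ≃ₗ[ℝ] V) :=
  Subgroup.closure {g | ∃ α ∈ R, ∀ v, g v = preRefl α v}

/-- The length of `w`: the number of positive roots sent to negative roots. -/
noncomputable def invLength (R S : Set V) (w : V ≃ₗ[ℝ] V) : ℕ :=
  {β | β ∈ R ∧ NonnegComb S β ∧ NonnegComb S (-(w β))}.ncard

/-- One step in the Bruhat order: multiply by a reflection and increase length. -/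
def BruhatStep (R S : Set V) (u v : V ≃ₗ[ℝ] V) : Prop :=
  ∃ t : V ≃ₗ[ℝ] V, (∃ β ∈ R, ∀ x, t x = preRefl β x) ∧ v = u * t ∧
    invLength R S u < invLength R S v

/-- The Bruhat order on the Weyl group. -/
def BruhatLE (R S : Set V) : (V ≃ₗ[ℝ] V) → (V ≃ₗ[ℝ] V) → Prop :=
  Relation.ReflTransGen (BruhatStep R S)

/-!
Irreducibility and the presence of a second root length give a long root `δ` with
`⟪δ, β₀⟫ > 0`. As `β₀` is short, `⟨δ, β₀∨⟩ ≥ 2`, so `δ - β₀` and `δ - 2β₀` are roots, and one of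
`±(δ - β₀)` is a positive root `γ` with `β₀ + γ` a root. Since `β₀` is dominant, a simple root `v`
with `⟪γ, v⟫ > 0` can be subtracted from both `γ` and `β₀ + γ`; descending in this way ends at a
simple root `α` with `β₀ + α` a root. Then `⟨β₀ + α, α∨⟩ = ⟨β₀, α∨⟩ + 2 ≥ 2`, the simple reflection
`s_α` keeps the positive root `β₀ + α ≠ α` positive, and `s_α ρ = ρ - α` turns the dot action into
`s_α · x = s_α x - α`.
-/

lemma cartanInt_add_left (x y a : V) : cartanInt (x + y) a = cartanInt x a + cartanInt y a := by
  simp only [cartanInt, inner_add_left]; ring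

lemma cartanInt_sub_left (x y a : V) : cartanInt (x - y) a = cartanInt x a - cartanInt y a := by
  simp only [cartanInt, inner_sub_left]; ring

lemma cartanInt_smul_left (r : ℝ) (x a : V) : cartanInt (r • x) a = r * cartanInt x a := by
  simp only [cartanInt, real_inner_smul_left]; ring

lemma cartanInt_self {a : V} (ha : a ≠ 0) : cartanInt a a = 2 := by
  have : ⟪a, a⟫_ℝ ≠ 0 := inner_self_ne_zero.2 ha
  simp only [cartanInt]; field_simp

lemma cartanInt_pos {x a : V} (ha : a ≠ 0) (h : 0 < ⟪x, a⟫_ℝ) : 0 < cartanInt x a :=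
  div_pos (by linarith) (real_inner_self_pos.2 ha)

lemma cartanInt_mul_cartanInt_le_four (x y : V) : cartanInt x y * cartanInt y x ≤ 4 := by
  have hcs := real_inner_mul_inner_self_le x y
  calc cartanInt x y * cartanInt y x = 4 * (⟪x, y⟫_ℝ * ⟪x, y⟫_ℝ) / (⟪x, x⟫_ℝ * ⟪y, y⟫_ℝ) := by
        simp only [cartanInt, real_inner_comm x y]; ring
    _ ≤ 4 := div_le_of_le_mul₀ (mul_nonneg real_inner_self_nonneg real_inner_self_nonneg)
        (by norm_num) (by linarith)

lemma preRefl_add (a x y : V) : preRefl a (x + y) = preRefl a x + preRefl a y := by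
  simp only [preRefl, cartanInt_add_left, add_smul]; abel

lemma preRefl_preRefl {a : V} (ha : a ≠ 0) (v : V) : preRefl a (preRefl a v) = v := by
  simp only [preRefl, cartanInt_sub_left, cartanInt_smul_left, cartanInt_self ha]
  module

lemma norm_preRefl (a v : V) : ‖preRefl a v‖ = ‖v‖ := by
  rcases eq_or_ne a 0 with rfl | ha
  · simp [preRefl]
  have : ⟪a, a⟫_ℝ ≠ 0 := inner_self_ne_zero.2 ha
  rw [norm_eq_sqrt_real_inner, norm_eq_sqrt_real_inner, preRefl, real_inner_sub_sub_self]
  congr 1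
  simp only [real_inner_smul_left, real_inner_smul_right, real_inner_comm a v, cartanInt]
  field_simp
  ring

lemma preRefl_preRefl_add_sub {α ρ : V} (hα : α ≠ 0) (hρ : cartanInt ρ α = 1) (y : V) :
    preRefl α (preRefl α y + ρ) - ρ = y - α := by
  rw [preRefl_add, preRefl_preRefl hα, preRefl, hρ, one_smul]
  abel

namespace IsRootSystem

variable {R : Set V} (hR : IsRootSystem R)
include hR

lemma neg_mem {α : V} (hα : α ∈ R) : -α ∈ R := by
  have h := hR.reflect_mem α hα α hα
  rwa [preRefl, cartanInt_self (hR.ne_zero α hα), two_smul, sub_add_cancel_left] at h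

lemma cartanInt_eq_one_or_of_inner_pos {γ δ : V} (hγ : γ ∈ R) (hδ : δ ∈ R)
    (hpos : 0 < ⟪γ, δ⟫_ℝ) :
    cartanInt γ δ = 1 ∨ cartanInt δ γ = 1 ∨ (cartanInt γ δ = 2 ∧ cartanInt δ γ = 2) := by
  obtain ⟨m, hm⟩ := hR.crystallographic δ hδ γ hγ
  obtain ⟨n, hn⟩ := hR.crystallographic γ hγ δ hδ
  have hm1 : 1 ≤ m := by
    have := cartanInt_pos (hR.ne_zero δ hδ) hpos
    rw [hm] at this; exact_mod_cast this
  have hn1 : 1 ≤ n := by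
    have := cartanInt_pos (hR.ne_zero γ hγ) (real_inner_comm γ δ ▸ hpos)
    rw [hn] at this; exact_mod_cast this
  have hmn : m * n ≤ 4 := by
    have := cartanInt_mul_cartanInt_le_four γ δ
    rw [hm, hn] at this; exact_mod_cast this
  rw [hm, hn]
  by_cases hm2 : m = 1
  · simp [hm2]
  by_cases hn2 : n = 1
  · simp [hn2]
  have : m = 2 ∧ n = 2 := by
    have : 2 ≤ m := by omega
    have : 2 ≤ n := by omega
    constructor <;> nlinarith
  simp [this]

lemma sub_mem_of_inner_pos {γ δ : V} (hγ : γ ∈ R) (hδ : δ ∈ R) (hpos : 0 < ⟪γ, δ⟫_ℝ)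
    (hne : γ ≠ δ) : γ - δ ∈ R := by
  rcases hR.cartanInt_eq_one_or_of_inner_pos hγ hδ hpos with h | h | ⟨h₁, h₂⟩
  · simpa [preRefl, h] using hR.reflect_mem δ hδ γ hγ
  · simpa [preRefl, h] using hR.neg_mem (hR.reflect_mem γ hγ δ hδ)
  · -- both Cartan integers equal to 2 force `⟪γ, δ⟫ = ‖γ‖² = ‖δ‖²`, hence `γ = δ`
    refine absurd (sub_eq_zero.1 (inner_self_eq_zero (𝕜 := ℝ) |>.1 ?_)) hne
    have hγ0 : ⟪γ, γ⟫_ℝ ≠ 0 := inner_self_ne_zero.2 (hR.ne_zero γ hγ)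
    have hδ0 : ⟪δ, δ⟫_ℝ ≠ 0 := inner_self_ne_zero.2 (hR.ne_zero δ hδ)
    simp only [cartanInt, real_inner_comm γ δ] at h₁ h₂
    field_simp at h₁ h₂
    rw [real_inner_sub_sub_self]
    linarith

lemma sub_two_smul_mem {α β : V} (hα : α ∈ R) (hβ : β ∈ R) (h2 : 2 ≤ cartanInt β α) :
    β - (2 : ℝ) • α ∈ R := by
  have hαα := real_inner_self_pos.2 (hR.ne_zero α hα)
  rcases eq_or_ne β α with rfl | hne
  · simpa [two_smul] using hR.neg_mem hα
  rcases h2.lt_or_eq with h2 | h2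
  · rw [cartanInt, lt_div_iff₀ hαα] at h2
    have hsub := hR.sub_mem_of_inner_pos hβ hα (by linarith) hne
    have hne' : β - α ≠ α := by
      intro h
      have hβ2 : (2 : ℝ) • α = β := by rw [two_smul]; nth_rw 1 [← h]; exact sub_add_cancel β α
      rcases hR.reduced α hα 2 (hβ2 ▸ hβ) with h | h <;> norm_num at h
    simpa [two_smul, sub_sub] using
      hR.sub_mem_of_inner_pos hsub hα (by rw [inner_sub_left]; linarith) hne'
  · simpa [preRefl, ← h2] using hR.reflect_mem α hα β hβ

lemma two_le_cartanInt_of_norm_lt {α β : V} (hα : α ∈ R) (hβ : β ∈ R) (hlt : ‖β‖ < ‖α‖)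
    (hpos : 0 < ⟪α, β⟫_ℝ) : 2 ≤ cartanInt α β := by
  obtain ⟨m, hm⟩ := hR.crystallographic β hβ α hα
  obtain ⟨n, hn⟩ := hR.crystallographic α hα β hβ
  have hn1 : 1 ≤ n := by
    have := cartanInt_pos (hR.ne_zero α hα) (real_inner_comm α β ▸ hpos)
    rw [hn] at this; exact_mod_cast this
  have hnm : n < m := by
    have : cartanInt β α < cartanInt α β := by
      simp only [cartanInt, real_inner_comm α β, real_inner_self_eq_norm_sq]
      have := norm_pos_iff.2 (hR.ne_zero β hβ)
      gcongr
    rw [hm, hn] at this; exact_mod_cast this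
  rw [hm]; exact_mod_cast (show (2 : ℤ) ≤ m by omega)

end IsRootSystem

def natComb (c : V →₀ ℕ) : V := c.sum fun v n => (n : ℝ) • v

lemma nonnegComb_iff {S : Set V} {β : V} :
    NonnegComb S β ↔ ∃ c : V →₀ ℕ, ↑c.support ⊆ S ∧ β = natComb c := Iff.rfl

lemma natComb_add (c d : V →₀ ℕ) : natComb (c + d) = natComb c + natComb d :=
  Finsupp.sum_add_index' (by simp) (by simp [add_smul])

lemma natComb_single (v : V) (n : ℕ) : natComb (Finsupp.single v n) = (n : ℝ) • v :=
  Finsupp.sum_single_index (by simp)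

lemma map_natComb (φ : V →ₗ[ℝ] ℝ) (c : V →₀ ℕ) :
    φ (natComb c) = ∑ v ∈ c.support, (c v : ℝ) * φ v := by
  simp [natComb, Finsupp.sum]

def IsCoord (S : Set V) (t : V) (φ : V →ₗ[ℝ] ℝ) : Prop :=
  φ t = 1 ∧ ∀ s ∈ S, s ≠ t → φ s = 0

lemma exists_isCoord {S : Set V} (hind : LinearIndependent ℝ ((↑) : S → V)) {t : V}
    (ht : t ∈ S) : ∃ φ, IsCoord S t φ := by
  obtain ⟨φ, hφ0, hφt⟩ := LinearMap.exists_extend_of_notMem (0 : _ →ₗ[ℝ] ℝ)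
    (LinearIndepOn.notMem_span (v := id) hind ht) 1
  refine ⟨φ, hφt, fun s hs hst => ?_⟩
  exact congr($hφ0 ⟨s, Submodule.subset_span ⟨s, ⟨hs, hst⟩, rfl⟩⟩)

namespace IsCoord

variable {S : Set V} {t : V} {φ : V →ₗ[ℝ] ℝ} (hφ : IsCoord S t φ)
include hφ

lemma apply_natComb {c : V →₀ ℕ} (hc : ↑c.support ⊆ S) : φ (natComb c) = c t := by
  rw [map_natComb, Finset.sum_eq_single t (fun s hs hst => by rw [hφ.2 s (hc hs) hst, mul_zero])
    (fun ht => by rw [Finsupp.notMem_support_iff.1 ht, Nat.cast_zero, zero_mul]), hφ.1, mul_one]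

lemma nonneg_of_nonnegComb {x : V} (hx : NonnegComb S x) : 0 ≤ φ x := by
  obtain ⟨c, hc, rfl⟩ := nonnegComb_iff.1 hx
  rw [hφ.apply_natComb hc]
  positivity

end IsCoord

namespace NonnegComb

variable {S : Set V}

lemma of_mem {α : V} (hα : α ∈ S) : NonnegComb S α :=
  nonnegComb_iff.2 ⟨Finsupp.single α 1, by simpa using hα, by simp [natComb_single]⟩

lemma add {x y : V} (hx : NonnegComb S x) (hy : NonnegComb S y) : NonnegComb S (x + y) := by
  classical
  obtain ⟨c, hc, rfl⟩ := nonnegComb_iff.1 hx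
  obtain ⟨d, hd, rfl⟩ := nonnegComb_iff.1 hy
  refine nonnegComb_iff.2 ⟨c + d, (Finset.coe_subset.2 Finsupp.support_add).trans ?_,
    (natComb_add c d).symm⟩
  rw [Finset.coe_union]
  exact Set.union_subset hc hd

variable (hind : LinearIndependent ℝ ((↑) : S → V))
include hind

lemma eq_zero_of_neg {x : V} (hx : NonnegComb S x) (hnx : NonnegComb S (-x)) : x = 0 := by
  obtain ⟨c, hc, rfl⟩ := nonnegComb_iff.1 hx
  suffices c = 0 by simp [this, natComb]
  ext t
  by_contra hct
  have ht : t ∈ c.support := Finsupp.mem_support_iff.2 hct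
  obtain ⟨φ, hφ⟩ := exists_isCoord hind (hc ht)
  have := hφ.nonneg_of_nonnegComb hnx
  rw [map_neg, hφ.apply_natComb hc] at this
  have : (0 : ℝ) < c t := by exact_mod_cast Nat.pos_of_ne_zero hct
  linarith

lemma nonneg_of_smul {t : V} (ht : t ∈ S) {r : ℝ} (h : NonnegComb S (r • t)) : 0 ≤ r := by
  obtain ⟨φ, hφ⟩ := exists_isCoord hind ht
  simpa [hφ.1] using hφ.nonneg_of_nonnegComb h

end NonnegComb

namespace IsBase

variable {R S : Set V} (hR : IsRootSystem R) (hS : IsBase R S)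
include hR hS

lemma nonnegComb_preRefl {α β : V} (hα : α ∈ S) (hβ : β ∈ R) (hβpos : NonnegComb S β)
    (hne : β ≠ α) : NonnegComb S (preRefl α β) := by
  obtain ⟨c, hc, rfl⟩ := nonnegComb_iff.1 hβpos
  obtain ⟨t, htc, hta⟩ : ∃ t ∈ c.support, t ≠ α := by
    by_contra! hall
    have hsingle : c = Finsupp.single α (c α) :=
      Finsupp.support_subset_singleton.1 fun v hv => Finset.mem_singleton.2 (hall v hv)
    rw [hsingle, natComb_single] at hβ hne
    rcases hR.reduced α (hS.subset hα) _ hβ with h | h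
    · exact hne (by rw [h, one_smul])
    · have : (0 : ℝ) ≤ c α := Nat.cast_nonneg _
      linarith
  obtain ⟨φ, hφ⟩ := exists_isCoord hS.indep (hc htc)
  have hφβ : 0 < φ (preRefl α (natComb c)) := by
    rw [preRefl, map_sub, map_smul, hφ.2 α hα hta.symm, smul_zero, sub_zero, hφ.apply_natComb hc]
    exact_mod_cast Nat.pos_of_ne_zero (Finsupp.mem_support_iff.1 htc)
  refine (hS.pos_or_neg _ (hR.reflect_mem α (hS.subset hα) _ hβ)).resolve_right fun hneg => ?_
  have := hφ.nonneg_of_nonnegComb hneg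
  rw [map_neg] at this
  linarith

lemma exists_simple_add_mem {β γ : V} (hβ : β ∈ R) (hβpos : NonnegComb S β)
    (hdom : ∀ s ∈ S, 0 ≤ ⟪β, s⟫_ℝ) (hγ : γ ∈ R) (hγpos : NonnegComb S γ)
    (hβγ : β + γ ∈ R) : ∃ α ∈ S, β + α ∈ R := by
  obtain ⟨c, hc, rfl⟩ := nonnegComb_iff.1 hγpos
  clear hγpos
  induction c using WellFoundedLT.induction with
  | ind c ih =>
  have hsum : ∑ v ∈ c.support, (0 : ℝ) < ∑ v ∈ c.support, (c v : ℝ) * ⟪natComb c, v⟫_ℝ := by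
    have := map_natComb (innerₗ V (natComb c)) c
    simp only [innerₗ_apply_apply] at this
    rw [Finset.sum_const_zero, ← this]
    exact real_inner_self_pos.2 (hR.ne_zero _ hγ)
  obtain ⟨v, hv, hvpos⟩ := Finset.exists_lt_of_sum_lt hsum
  have hγv : 0 < ⟪natComb c, v⟫_ℝ := pos_of_mul_pos_right hvpos (Nat.cast_nonneg _)
  have hvR : v ∈ R := hS.subset (hc hv)
  by_cases hγv' : natComb c = v
  · exact ⟨v, hc hv, hγv' ▸ hβγ⟩
  obtain ⟨d, rfl⟩ : ∃ d, c = Finsupp.single v 1 + d := exists_add_of_le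
    (Finsupp.single_le_iff.2 (Nat.one_le_iff_ne_zero.2 (Finsupp.mem_support_iff.1 hv)))
  have hγ_eq : natComb (Finsupp.single v 1 + d) = v + natComb d := by
    rw [natComb_add, natComb_single, Nat.cast_one, one_smul]
  rw [hγ_eq] at hγ hβγ hγv hγv'
  have hd : ↑d.support ⊆ S := (Finset.coe_subset.2 (Finsupp.support_mono le_add_self)).trans hc
  have hdR : natComb d ∈ R := by
    simpa using hR.sub_mem_of_inner_pos hγ hvR hγv hγv'
  have hne : β + (v + natComb d) ≠ v := by
    intro h
    have : natComb d = -β :=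
      eq_neg_of_add_eq_zero_left (by rw [← add_right_inj v, add_zero]; convert h using 1; abel)
    exact hR.ne_zero β hβ (hβpos.eq_zero_of_neg hS.indep (this ▸ nonnegComb_iff.2 ⟨d, hd, rfl⟩))
  have hpos : 0 < ⟪β + (v + natComb d), v⟫_ℝ := by
    rw [inner_add_left]; linarith [hdom v (hc hv)]
  refine ih d (lt_add_of_pos_left d (pos_iff_ne_zero.2 (by simp))) hd hdR ?_
  simpa [add_sub_assoc] using hR.sub_mem_of_inner_pos hβγ hvR hpos hne

end IsBase

lemma IsIrreducibleRS.exists_inner_ne_zero {R L : Set V} (hirr : IsIrreducibleRS R)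
    (hR0 : ∀ α ∈ R, α ≠ 0) (hLR : L ⊆ R) (hL : L.Nonempty)
    (hrefl : ∀ b ∈ R, ∀ η ∈ L, preRefl b η ∈ L) {x : V} (hx : x ∈ R) :
    ∃ η ∈ L, ⟪η, x⟫_ℝ ≠ 0 := by
  set R₂ := {y ∈ R | ∃ η ∈ L, ⟪η, y⟫_ℝ ≠ 0}
  have horth : ∀ a ∈ R \ R₂, ∀ b ∈ R₂, ⟪a, b⟫_ℝ = 0 := by
    rintro a ⟨haR, ha⟩ b ⟨hbR, η, hηL, hηb⟩
    by_contra hab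
    have hηa : ⟪η, a⟫_ℝ = 0 := by
      by_contra h
      exact ha ⟨haR, η, hηL, h⟩
    -- `⟪s_b η, a⟫ = -⟨η, b∨⟩ ⟪b, a⟫ ≠ 0`, so `a` would lie in `R₂`
    refine ha ⟨haR, preRefl b η, hrefl b hbR η hηL, ?_⟩
    rw [preRefl, inner_sub_left, real_inner_smul_left, hηa, zero_sub, neg_ne_zero,
      real_inner_comm]
    exact mul_ne_zero (div_ne_zero (mul_ne_zero two_ne_zero hηb)
      (inner_self_ne_zero.2 (hR0 b hbR))) hab
  rcases hirr (R \ R₂) R₂ (Set.sdiff_union_of_subset fun _ hy => hy.1).symm horth with h | h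
  · by_contra! hx'
    exact Set.eq_empty_iff_forall_notMem.1 h x ⟨hx, fun ⟨_, η, hη, hne⟩ => hne (hx' η hη)⟩
  · obtain ⟨η, hη⟩ := hL
    exact (Set.eq_empty_iff_forall_notMem.1 h η
      ⟨hLR hη, η, hη, inner_self_ne_zero.2 (hR0 η (hLR hη))⟩).elim

lemma IsShort.exists_norm_lt_inner_pos {R : Set V} {β₀ : V} (hβ₀ : IsShort R β₀)
    (hR : IsRootSystem R) (hirr : IsIrreducibleRS R) (hnsl : ¬ IsSimplyLaced R) :
    ∃ δ ∈ R, ‖β₀‖ < ‖δ‖ ∧ 0 < ⟪δ, β₀⟫_ℝ := by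
  have hL : {η ∈ R | ‖β₀‖ < ‖η‖}.Nonempty := by
    by_contra! h
    refine hnsl fun a ha b hb => ?_
    have hnorm : ∀ γ ∈ R, ‖γ‖ = ‖β₀‖ := fun γ hγ =>
      le_antisymm (not_lt.1 fun hlt => h.subset ⟨hγ, hlt⟩) (hβ₀.2 γ hγ)
    rw [hnorm a ha, hnorm b hb]
  obtain ⟨η, ⟨hηR, hηl⟩, hη⟩ := hirr.exists_inner_ne_zero hR.ne_zero (fun _ h => h.1) hL
    (fun b hb η hη => ⟨hR.reflect_mem b hb η hη.1, by rw [norm_preRefl]; exact hη.2⟩) hβ₀.1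
  rcases hη.lt_or_gt with h | h
  · exact ⟨-η, hR.neg_mem hηR, by rwa [norm_neg], by rw [inner_neg_left]; linarith⟩
  · exact ⟨η, hηR, hηl, h⟩

namespace IsHighestShortRoot

variable {R S : Set V} {β₀ : V} (hβ₀ : IsHighestShortRoot R S β₀) (hR : IsRootSystem R)
  (hS : IsBase R S)
include hβ₀ hR hS

lemma nonnegComb : NonnegComb S β₀ := by
  have hβ₀R := hβ₀.1.1
  refine (hS.pos_or_neg β₀ hβ₀R).resolve_right fun hneg => hR.ne_zero β₀ hβ₀R ?_
  -- `-β₀` is short as well, so `2 β₀ = β₀ - (-β₀)` would be both positive and negative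
  have h2 : NonnegComb S (β₀ - -β₀) := hβ₀.2 _ ⟨hR.neg_mem hβ₀R, by simpa using hβ₀.1.2⟩
  have := h2.eq_zero_of_neg hS.indep (by convert hneg.add hneg using 1; abel)
  simpa [sub_neg_eq_add, ← two_smul ℝ] using this

lemma inner_nonneg {s : V} (hs : s ∈ S) : 0 ≤ ⟪β₀, s⟫_ℝ := by
  have hsR := hS.subset hs
  have h := hβ₀.2 _ ⟨hR.reflect_mem s hsR β₀ hβ₀.1.1, by simpa [norm_preRefl] using hβ₀.1.2⟩
  rw [preRefl, sub_sub_cancel] at h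
  have := h.nonneg_of_smul hS.indep hs
  rw [cartanInt, le_div_iff₀ (real_inner_self_pos.2 (hR.ne_zero s hsR)), zero_mul] at this
  linarith

lemma exists_simple_add_mem (hirr : IsIrreducibleRS R) (hnsl : ¬ IsSimplyLaced R) :
    ∃ α ∈ S, β₀ + α ∈ R := by
  have hβ₀R := hβ₀.1.1
  obtain ⟨δ, hδ, hlt, hpos⟩ := hβ₀.1.exists_norm_lt_inner_pos hR hirr hnsl
  have hne : δ ≠ β₀ := by rintro rfl; exact lt_irrefl _ hlt
  have hsub := hR.sub_mem_of_inner_pos hδ hβ₀R hpos hne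
  have hsub₂ := hR.sub_two_smul_mem hβ₀R hδ (hR.two_le_cartanInt_of_norm_lt hδ hβ₀R hlt hpos)
  have descent : ∀ γ ∈ R, NonnegComb S γ → β₀ + γ ∈ R → ∃ α ∈ S, β₀ + α ∈ R := fun γ =>
    hS.exists_simple_add_mem hR hβ₀R (hβ₀.nonnegComb hR hS) (fun s => hβ₀.inner_nonneg hR hS)
  rcases hS.pos_or_neg _ hsub with h | h
  · exact descent _ hsub h (by rwa [add_sub_cancel])
  · refine descent _ (hR.neg_mem hsub) h ?_
    convert hR.neg_mem hsub₂ using 1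
    module

end IsHighestShortRoot

/-- In a non-simply-laced irreducible root system with highest short root
`β₀`, there is a simple root `α` with `β₀ + α` a root, `⟨β₀ + α, α∨⟩ ≥ 2`; consequently
`β = s_α(β₀ + α)` is a positive root with `s_α · β = β₀` for the dot action
(`ρ` being the half sum of positive roots, characterized by `⟨ρ, α∨⟩ = 1` for simple `α`). -/
theorem exists_simple_dot_eq_highestShort
    {R S : Set V} (hR : IsRootSystem R) (hS : IsBase R S)
    (hirr : IsIrreducibleRS R) (hnsl : ¬ IsSimplyLaced R)
    {β₀ : V} (hβ₀ : IsHighestShortRoot R S β₀)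
    {ρ : V} (hρ : ∀ α ∈ S, cartanInt ρ α = 1) :
    ∃ α ∈ S, β₀ + α ∈ R ∧ 2 ≤ cartanInt (β₀ + α) α ∧
      (preRefl α (β₀ + α) ∈ R ∧ NonnegComb S (preRefl α (β₀ + α))) ∧
      preRefl α (preRefl α (β₀ + α) + ρ) - ρ = β₀ := by
  obtain ⟨α, hαS, hα⟩ := hβ₀.exists_simple_add_mem hR hS hirr hnsl
  have hαR := hS.subset hαS
  have hα0 := hR.ne_zero α hαR
  have hne : β₀ + α ≠ α := fun h => hR.ne_zero β₀ hβ₀.1.1 (add_eq_right.1 h)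
  have hpos : NonnegComb S (β₀ + α) := (hβ₀.nonnegComb hR hS).add (.of_mem hαS)
  refine ⟨α, hαS, hα, ?_, ⟨hR.reflect_mem α hαR _ hα, hS.nonnegComb_preRefl hR hαS hα hpos hne⟩,
    by rw [preRefl_preRefl_add_sub hα0 (hρ α hαS), add_sub_cancel_right]⟩
  rw [cartanInt_add_left, cartanInt_self hα0, le_add_iff_nonneg_left]
  exact div_nonneg (mul_nonneg zero_le_two (hβ₀.inner_nonneg hR hS hαS)) real_inner_self_nonneg
end

section
/- Let R be an irreducible crystallographic root system, α a simple root, and μ₁ a root with μ₁ ≠ -α and ⟨μ₁, α∨⟩ = -2. Then μ₁ + α is a short root, and μ₁ + α is not the negative of a simple root. -/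
open scoped InnerProductSpace

variable {V : Type*} [NormedAddCommGroup V] [InnerProductSpace ℝ V]

/-!
From `⟨μ₁, α∨⟩ = -2` we get `⟪μ₁, α⟫ = -‖α‖²`, and strict Cauchy–Schwarz (`μ₁ ≠ ±α`) gives
`‖α‖ < ‖μ₁‖`. Hence the integer `⟨α, μ₁∨⟩ = -2‖α‖²/‖μ₁‖²` lies strictly between `-2` and `0`, so it
is `-1`: thus `‖μ₁‖² = 2‖α‖²`, and `μ₁ + α = s_{μ₁} α` is a root with `‖μ₁ + α‖ = ‖α‖`.

In an irreducible root system each root `γ` is non-orthogonal to some root of any given length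
(the span of the roots of that length is reflection-stable), and non-orthogonal roots of different
lengths have squared-length ratio `2` or `3`. A root `γ` shorter than `α` would make both
`‖α‖²/‖γ‖²` and `2‖α‖²/‖γ‖²` equal to `2` or `3`, which is impossible.

Finally, if `σ = -(μ₁ + α)` were simple, then `σ - α = -s_α μ₁` would be a root, but a difference
of two simple roots is never a root.
-/

lemma cartanInt_mul_inner_self {x y : V} (hy : y ≠ 0) :
    cartanInt x y * ⟪y, y⟫_ℝ = 2 * ⟪x, y⟫_ℝ := by
  have : ⟪y, y⟫_ℝ ≠ 0 := inner_self_ne_zero.mpr hy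
  rw [cartanInt]; field_simp

lemma cartanInt_self_s7 {x : V} (hx : x ≠ 0) : cartanInt x x = 2 := by
  have : ⟪x, x⟫_ℝ ≠ 0 := inner_self_ne_zero.mpr hx
  rw [cartanInt]; field_simp

lemma inner_preRefl_self {δ : V} (hδ : δ ≠ 0) (x : V) :
    ⟪preRefl δ x, preRefl δ x⟫_ℝ = ⟪x, x⟫_ℝ := by
  have : ⟪δ, δ⟫_ℝ ≠ 0 := inner_self_ne_zero.mpr hδ
  simp only [preRefl, cartanInt, inner_sub_left, inner_sub_right, real_inner_smul_left,
    real_inner_smul_right, real_inner_comm x δ]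
  field_simp
  ring

lemma inner_eq_zero_of_preRefl_mem {U : Submodule ℝ V} {b u : V} (hb : b ∉ U) (hu : u ∈ U)
    (hbu : preRefl b u ∈ U) : ⟪b, u⟫_ℝ = 0 := by
  have hmem : cartanInt u b • b ∈ U := by
    simpa [preRefl] using U.sub_mem hu hbu
  have hc : cartanInt u b = 0 := by
    by_contra hc
    exact hb ((U.smul_mem_iff hc).mp hmem)
  have hb0 : b ≠ 0 := by rintro rfl; exact hb U.zero_mem
  have h := cartanInt_mul_inner_self (x := u) hb0
  rw [hc, zero_mul] at h
  rw [real_inner_comm]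
  linarith

lemma IsIrreducibleRS.subset_of_inner_eq_zero {R : Set V} (hirr : IsIrreducibleRS R)
    (U : Submodule ℝ V) {β : V} (hβ : β ∈ R) (hβU : β ∈ U)
    (horth : ∀ a ∈ R, a ∈ U → ∀ b ∈ R, b ∉ U → ⟪a, b⟫_ℝ = 0) : R ⊆ U := by
  rcases hirr {a | a ∈ R ∧ a ∈ U} {b | b ∈ R ∧ b ∉ U}
      (by ext z; by_cases hz : z ∈ U <;> simp [hz])
      (fun a ha b hb => horth a ha.1 ha.2 b hb.1 hb.2) with h | h
  · exact absurd ⟨hβ, hβU⟩ (Set.eq_empty_iff_forall_notMem.mp h β)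
  · exact fun z hz => not_not.mp fun hzU => Set.eq_empty_iff_forall_notMem.mp h z ⟨hz, hzU⟩

lemma not_nonnegComb_sub {S : Set V} (hind : LinearIndependent ℝ ((↑) : S → V)) {σ α : V}
    (hσ : σ ∈ S) (hα : α ∈ S) (hne : σ ≠ α) : ¬ NonnegComb S (σ - α) := by
  classical
  rintro ⟨c, hc, hsum⟩
  set f : V →₀ ℝ := c.mapRange (↑) Nat.cast_zero + Finsupp.single α 1
  have hf : f ∈ Finsupp.supported ℝ ℝ S := by
    refine Submodule.add_mem _ (fun x hx => hc (Finsupp.support_mapRange hx)) ?_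
    exact Finsupp.single_mem_supported ℝ 1 hα
  have hcomb : Finsupp.linearCombination ℝ id f =
      Finsupp.linearCombination ℝ id (Finsupp.single σ 1) := by
    rw [map_add, Finsupp.linearCombination_apply, Finsupp.sum_mapRange_index (by simp)]
    simp only [Finsupp.linearCombination_single, id, one_smul, ← hsum, sub_add_cancel]
  have hfσ := linearIndepOn_iffₛ.mp (linearIndependent_subtype_iff.mp hind) f hf _
    (Finsupp.single_mem_supported ℝ 1 hσ) hcomb
  have hα' := DFunLike.congr_fun hfσ α
  simp [f, hne] at hα'
  linarith [(c α).cast_nonneg (α := ℝ)]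

lemma isShort_of_forall_inner_self_le {R : Set V} {β : V} (hβ : β ∈ R)
    (h : ∀ γ ∈ R, ⟪β, β⟫_ℝ ≤ ⟪γ, γ⟫_ℝ) : IsShort R β := by
  refine ⟨hβ, fun γ hγ => ?_⟩
  have h' := h γ hγ
  rw [real_inner_self_eq_norm_sq, real_inner_self_eq_norm_sq] at h'
  exact (pow_le_pow_iff_left₀ (norm_nonneg _) (norm_nonneg _) two_ne_zero).mp h'

namespace IsRootSystem

variable {R : Set V}

lemma neg_mem_s7 (hR : IsRootSystem R) {x : V} (hx : x ∈ R) : -x ∈ R := by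
  have h := hR.reflect_mem x hx x hx
  rwa [preRefl, cartanInt_self_s7 (hR.ne_zero x hx), two_smul, sub_add_cancel_left] at h

lemma inner_mul_inner_self_lt (hR : IsRootSystem R) {x y : V} (hx : x ∈ R) (hy : y ∈ R)
    (hyx : y ≠ x) (hyx' : y ≠ -x) : ⟪x, y⟫_ℝ * ⟪x, y⟫_ℝ < ⟪x, x⟫_ℝ * ⟪y, y⟫_ℝ := by
  refine (real_inner_mul_inner_self_le x y).lt_of_ne fun h => ?_
  have habs : ‖⟪x, y⟫_ℝ‖ = ‖x‖ * ‖y‖ := by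
    rw [Real.norm_eq_abs, ← sq_eq_sq₀ (abs_nonneg _) (by positivity), sq_abs, mul_pow,
      ← real_inner_self_eq_norm_sq, ← real_inner_self_eq_norm_sq, sq, h]
  obtain ⟨r, -, rfl⟩ := (norm_inner_eq_norm_iff (hR.ne_zero x hx) (hR.ne_zero _ hy)).mp habs
  rcases hR.reduced x hx r hy with rfl | rfl
  · exact hyx (one_smul ℝ x)
  · exact hyx' (neg_one_smul ℝ x)

/-- With `m = ⟨x, y∨⟩` and `n = ⟨y, x∨⟩`, strict Cauchy–Schwarz gives `0 < m n < 4`, while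
`m / n = ⟪x, x⟫ / ⟪y, y⟫ > 1`. -/
lemma inner_self_eq_two_or_three_mul (hR : IsRootSystem R) {x y : V} (hx : x ∈ R) (hy : y ∈ R)
    (hxy : ⟪x, y⟫_ℝ ≠ 0) (hlt : ⟪y, y⟫_ℝ < ⟪x, x⟫_ℝ) :
    ⟪x, x⟫_ℝ = 2 * ⟪y, y⟫_ℝ ∨ ⟪x, x⟫_ℝ = 3 * ⟪y, y⟫_ℝ := by
  obtain ⟨m, hm⟩ := hR.crystallographic y hy x hx
  obtain ⟨n, hn⟩ := hR.crystallographic x hx y hy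
  have hm' : m * ⟪y, y⟫_ℝ = 2 * ⟪x, y⟫_ℝ := hm ▸ cartanInt_mul_inner_self (hR.ne_zero y hy)
  have hn' : n * ⟪x, x⟫_ℝ = 2 * ⟪x, y⟫_ℝ :=
    real_inner_comm x y ▸ hn ▸ cartanInt_mul_inner_self (hR.ne_zero x hx)
  have hy0 : 0 < ⟪y, y⟫_ℝ := real_inner_self_pos.mpr (hR.ne_zero y hy)
  have hCS := hR.inner_mul_inner_self_lt hx hy (by rintro rfl; exact hlt.ne rfl)
    (by rintro rfl; rw [inner_neg_neg] at hlt; exact hlt.ne rfl)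
  have hprod : (m * n : ℝ) * (⟪x, x⟫_ℝ * ⟪y, y⟫_ℝ) = 4 * (⟪x, y⟫_ℝ * ⟪x, y⟫_ℝ) := by
    linear_combination (n * ⟪x, x⟫_ℝ) * hm' + (2 * ⟪x, y⟫_ℝ) * hn'
  have hP : 0 < ⟪x, x⟫_ℝ * ⟪y, y⟫_ℝ := mul_pos (hy0.trans hlt) hy0
  have hn0 : (n : ℝ) ≠ 0 := by rintro h; rw [h] at hn'; exact hxy (by linarith)
  have hmn_lt : m * n < 4 := by
    have : (m * n : ℝ) < 4 := lt_of_mul_lt_mul_right (by rw [hprod]; linarith) hP.le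
    exact_mod_cast this
  have hnn : n * n < m * n := by
    have h : (m * n : ℝ) * ⟪y, y⟫_ℝ = (n * n) * ⟪x, x⟫_ℝ := by
      linear_combination n * hm' - n * hn'
    have : (n * n : ℝ) < m * n :=
      lt_of_mul_lt_mul_right (by rw [h]; exact mul_lt_mul_of_pos_left hlt (mul_self_pos.mpr hn0))
        hy0.le
    exact_mod_cast this
  have hmn : m = 2 * n ∨ m = 3 * n := by
    have : -1 ≤ n ∧ n ≤ 1 := by constructor <;> nlinarith
    obtain ⟨h1, h2⟩ := this
    interval_cases n <;> omega
  rcases hmn with rfl | rfl <;> push_cast at hm' <;> [left; right] <;>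
    exact mul_left_cancel₀ hn0 (by linarith)

lemma exists_mem_inner_ne_zero (hR : IsRootSystem R) (hirr : IsIrreducibleRS R) {O : Set V}
    (hOR : O ⊆ R) {β : V} (hβ : β ∈ O) (hO : ∀ b ∈ R, ∀ u ∈ O, preRefl b u ∈ O)
    {γ : V} (hγ : γ ∈ R) : ∃ v ∈ O, ⟪v, γ⟫_ℝ ≠ 0 := by
  set U := Submodule.span ℝ O
  -- a root `b ∉ U` must be orthogonal to `U`, since `u - s_b u ∈ U` is a multiple of `b`
  have horth : ∀ a ∈ R, a ∈ U → ∀ b ∈ R, b ∉ U → ⟪a, b⟫_ℝ = 0 := by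
    intro a _ ha b hb hbU
    have hOb : O ⊆ (ℝ ∙ b)ᗮ := fun u hu => Submodule.mem_orthogonal_singleton_iff_inner_right.mpr
      (inner_eq_zero_of_preRefl_mem hbU (Submodule.subset_span hu)
        (Submodule.subset_span (hO b hb u hu)))
    rw [real_inner_comm]
    exact Submodule.mem_orthogonal_singleton_iff_inner_right.mp (Submodule.span_le.mpr hOb ha)
  have hRU := hirr.subset_of_inner_eq_zero U (hOR hβ) (Submodule.subset_span hβ) horth
  by_contra! h
  have hOγ : O ⊆ (ℝ ∙ γ)ᗮ := fun u hu =>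
    Submodule.mem_orthogonal_singleton_iff_inner_right.mpr (by rw [real_inner_comm]; exact h u hu)
  have hγγ := Submodule.mem_orthogonal_singleton_iff_inner_right.mp
    (Submodule.span_le.mpr hOγ (hRU hγ))
  exact hR.ne_zero γ hγ (inner_self_eq_zero.mp hγγ)

lemma exists_inner_self_eq_inner_ne_zero (hR : IsRootSystem R) (hirr : IsIrreducibleRS R)
    {β γ : V} (hβ : β ∈ R) (hγ : γ ∈ R) : ∃ v ∈ R, ⟪v, v⟫_ℝ = ⟪β, β⟫_ℝ ∧ ⟪v, γ⟫_ℝ ≠ 0 := by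
  obtain ⟨v, ⟨hv, hvv⟩, hvγ⟩ :=
    hR.exists_mem_inner_ne_zero hirr (O := {v ∈ R | ⟪v, v⟫_ℝ = ⟪β, β⟫_ℝ}) (fun _ hv => hv.1)
      ⟨hβ, rfl⟩ (fun b hb u hu => ⟨hR.reflect_mem b hb u hu.1,
        (inner_preRefl_self (hR.ne_zero b hb) u).trans hu.2⟩) hγ
  exact ⟨v, hv, hvv, hvγ⟩

lemma inner_self_le_of_inner_self_eq_two_mul (hR : IsRootSystem R) (hirr : IsIrreducibleRS R)
    {α μ : V} (hα : α ∈ R) (hμ : μ ∈ R) (hμα : ⟪μ, μ⟫_ℝ = 2 * ⟪α, α⟫_ℝ) {γ : V} (hγ : γ ∈ R) :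
    ⟪α, α⟫_ℝ ≤ ⟪γ, γ⟫_ℝ := by
  by_contra! hlt
  obtain ⟨v, hv, hvv, hvγ⟩ := hR.exists_inner_self_eq_inner_ne_zero hirr hα hγ
  obtain ⟨w, hw, hww, hwγ⟩ := hR.exists_inner_self_eq_inner_ne_zero hirr hμ hγ
  have hv' := hR.inner_self_eq_two_or_three_mul hv hγ hvγ (hvv ▸ hlt)
  have hw' := hR.inner_self_eq_two_or_three_mul hw hγ hwγ
    (by linarith [real_inner_self_nonneg (x := γ)])
  rcases hv' with h | h <;> rcases hw' with h' | h' <;> linarith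

lemma cartanInt_eq_neg_one_of_cartanInt_eq_neg_two (hR : IsRootSystem R) {α μ : V} (hα : α ∈ R)
    (hμ : μ ∈ R) (hne : μ ≠ -α) (h : cartanInt μ α = -2) : cartanInt α μ = -1 := by
  have hα0 := hR.ne_zero α hα
  have hμα : ⟪α, μ⟫_ℝ = -⟪α, α⟫_ℝ := by
    have := cartanInt_mul_inner_self (x := μ) hα0
    rw [h] at this
    linarith [real_inner_comm μ α]
  have hαα : 0 < ⟪α, α⟫_ℝ := real_inner_self_pos.mpr hα0
  have hlt : ⟪α, α⟫_ℝ < ⟪μ, μ⟫_ℝ := by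
    have hμ_ne : μ ≠ α := by rintro rfl; rw [cartanInt_self_s7 hα0] at h; norm_num at h
    have := hR.inner_mul_inner_self_lt hα hμ hμ_ne hne
    rw [hμα] at this
    nlinarith
  obtain ⟨n, hn⟩ := hR.crystallographic μ hμ α hα
  have hn' : n * ⟪μ, μ⟫_ℝ = -2 * ⟪α, α⟫_ℝ := by
    rw [← hn, cartanInt_mul_inner_self (hR.ne_zero μ hμ), hμα]; ring
  have hn_neg : n < 0 := by exact_mod_cast (by nlinarith : (n : ℝ) < 0)
  have hn_gt : -2 < n := by exact_mod_cast (by nlinarith : (-2 : ℝ) < n)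
  rw [hn, show n = -1 by omega]
  norm_num

end IsRootSystem

lemma IsBase.sub_notMem {R S : Set V} (hR : IsRootSystem R) (hS : IsBase R S) {σ α : V}
    (hσ : σ ∈ S) (hα : α ∈ S) : σ - α ∉ R := by
  intro hmem
  have hne : σ ≠ α := by rintro rfl; exact hR.ne_zero _ hmem (sub_self σ)
  rcases hS.pos_or_neg _ hmem with h | h
  · exact not_nonnegComb_sub hS.indep hσ hα hne h
  · exact not_nonnegComb_sub hS.indep hα hσ hne.symm (by rwa [neg_sub] at h)

/-- If `α` is a simple root and `μ₁` a root with `μ₁ ≠ -α` and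
`⟨μ₁, α∨⟩ = -2`, then `μ₁ + α` is a short root and is not the negative of a simple root. -/
theorem short_not_neg_simple_of_cartan_neg_two
    {R S : Set V} (hR : IsRootSystem R) (hS : IsBase R S) (hirr : IsIrreducibleRS R)
    {α μ₁ : V} (hα : α ∈ S) (hμ : μ₁ ∈ R) (hne : μ₁ ≠ -α)
    (hcart : cartanInt μ₁ α = -2) :
    IsShort R (μ₁ + α) ∧ -(μ₁ + α) ∉ S := by
  have hαR := hS.subset hα
  have hαμ := hR.cartanInt_eq_neg_one_of_cartanInt_eq_neg_two hαR hμ hne hcart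
  have hμα : 2 * ⟪μ₁, α⟫_ℝ = -2 * ⟪α, α⟫_ℝ := by
    rw [← cartanInt_mul_inner_self (hR.ne_zero α hαR), hcart]
  have hμμ : ⟪μ₁, μ₁⟫_ℝ = 2 * ⟪α, α⟫_ℝ := by
    have := cartanInt_mul_inner_self (x := α) (hR.ne_zero μ₁ hμ)
    rw [hαμ] at this
    linarith [real_inner_comm μ₁ α]
  have hsum : μ₁ + α ∈ R := by
    simpa [preRefl, hαμ, add_comm] using hR.reflect_mem μ₁ hμ α hαR
  have hsum_sq : ⟪μ₁ + α, μ₁ + α⟫_ℝ = ⟪α, α⟫_ℝ := by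
    simp only [inner_add_left, inner_add_right, real_inner_comm μ₁ α]
    linarith
  refine ⟨isShort_of_forall_inner_self_le hsum fun γ hγ => hsum_sq ▸
    hR.inner_self_le_of_inner_self_eq_two_mul hirr hαR hμ hμμ hγ, fun hσ => ?_⟩
  refine hS.sub_notMem hR hσ hα ?_
  have : -(μ₁ + α) - α = -preRefl α μ₁ := by rw [preRefl, hcart]; module
  rw [this]
  exact hR.neg_mem_s7 (hR.reflect_mem α hαR μ₁ hμ)
end
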